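/- arXiv:2503.13378 — 2 statements merged into one kernel-verified Lean document; each statement's English description precedes it below -/
import Mathlib

section
/- Let x be the sequence x₀ = 1, x_k = 1 + 1/x_{k-1}, and u_k = x_{2k+1} − φ with φ = (1+√5)/2. Then the limit of (1+φ)^{2k} · u_k as k → ∞ exists and is a positive real number. -/
/-!
The recursion gives `x k = F (k + 2) / F (k + 1)` for the Fibonacci numbers `F`, and Binet's
formula `F (n + 1) - φ F n = ψ ^ n` turns this into `u k = ψ ^ n / F n` with `n = 2k + 2`.
Since `1 + φ = φ²` and `φψ = -1`, this gives `(1 + φ) ^ (2k) u k = φ ^ n / F n / φ⁴`, and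
`φ ^ n / F n = √5 / (1 - (ψ / φ) ^ n) → √5`, so the limit is `√5 / φ⁴ > 0`.
-/

open Filter Topology Real

lemma eq_fib_div_fib_of_rec {x : ℕ → ℝ} (h0 : x 0 = 1) (hrec : ∀ k, x (k + 1) = 1 + 1 / x k)
    (k : ℕ) : x k = Nat.fib (k + 2) / Nat.fib (k + 1) := by
  induction k with
  | zero => simp [h0]
  | succ k ih =>
    have hfib : (Nat.fib (k + 2) : ℝ) ≠ 0 := Nat.cast_ne_zero.2 (Nat.fib_pos.2 (by omega)).ne'
    rw [hrec, ih, Nat.fib_add_two (n := k + 1)]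
    push_cast
    field_simp
    ring

lemma fib_succ_div_fib_sub_goldenRatio {n : ℕ} (hn : n ≠ 0) :
    (Nat.fib (n + 1) / Nat.fib n : ℝ) - goldenRatio = goldenConj ^ n / Nat.fib n := by
  have hfib : (Nat.fib n : ℝ) ≠ 0 := Nat.cast_ne_zero.2 (Nat.fib_pos.2 (by omega)).ne'
  rw [← fib_succ_sub_goldenRatio_mul_fib, sub_div, mul_div_cancel_right₀ _ hfib]

lemma tendsto_goldenRatio_pow_div_fib :
    Tendsto (fun n ↦ goldenRatio ^ n / Nat.fib n) atTop (𝓝 √5) := by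
  have hratio : Tendsto (fun n ↦ (goldenConj / goldenRatio) ^ n) atTop (𝓝 0) :=
    tendsto_pow_atTop_nhds_zero_of_abs_lt_one <| by
      rw [abs_div, abs_of_pos goldenRatio_pos, div_lt_one goldenRatio_pos,
        abs_of_neg goldenConj_neg]
      linarith [neg_one_lt_goldenConj, one_lt_goldenRatio]
  have hformula (n : ℕ) :
      goldenRatio ^ n / Nat.fib n = √5 / (1 - (goldenConj / goldenRatio) ^ n) := by
    have hpow : goldenRatio ^ n ≠ 0 := pow_ne_zero _ goldenRatio_ne_zero
    rw [coe_fib_eq, div_pow goldenConj goldenRatio n, one_sub_div hpow, div_div_eq_mul_div,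
      div_div_eq_mul_div, mul_comm]
  have hlim := (tendsto_const_nhds (x := √5)).div (tendsto_const_nhds.sub hratio)
    (by norm_num : (1 : ℝ) - 0 ≠ 0)
  rw [sub_zero, div_one] at hlim
  exact hlim.congr fun n ↦ (hformula n).symm

lemma sq_pow_mul_pow_of_mul_eq_neg_one {R : Type*} [CommRing R] {a b : R} (hab : a * b = -1)
    (k : ℕ) : (a ^ 2) ^ (2 * k) * b ^ (2 * k + 2) * a ^ 4 = a ^ (2 * k + 2) := by
  calc (a ^ 2) ^ (2 * k) * b ^ (2 * k + 2) * a ^ 4 = a ^ (2 * k + 2) * (a * b) ^ (2 * (k + 1)) := by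
        ring
    _ = a ^ (2 * k + 2) := by rw [hab, pow_mul, neg_one_sq, one_pow, mul_one]

theorem golden_odd_error_limit (x : ℕ → ℝ)
    (h0 : x 0 = 1) (hrec : ∀ k, x (k + 1) = 1 + 1 / x k)
    (φ : ℝ) (hφ : φ = (1 + Real.sqrt 5) / 2)
    (u : ℕ → ℝ) (hu : ∀ k, u k = x (2 * k + 1) - φ) :
    ∃ L : ℝ, 0 < L ∧
      Filter.Tendsto (fun k => (1 + φ) ^ (2 * k) * u k) Filter.atTop (nhds L) := by
  obtain rfl : φ = goldenRatio := hφ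
  have hindex : Tendsto (fun k : ℕ ↦ 2 * k + 2) atTop atTop :=
    tendsto_atTop_atTop.2 fun b ↦ ⟨b, fun k hk ↦ by omega⟩
  refine ⟨√5 / goldenRatio ^ 4, by positivity, ?_⟩
  refine ((tendsto_goldenRatio_pow_div_fib.comp hindex).div_const _).congr fun k ↦ ?_
  rw [hu, eq_fib_div_fib_of_rec h0 hrec, fib_succ_div_fib_sub_goldenRatio (by omega),
    Function.comp_apply, add_comm 1, ← goldenRatio_sq,
    ← sq_pow_mul_pow_of_mul_eq_neg_one goldenRatio_mul_goldenConj k]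
  field_simp
end

section
/- For the sequence x₀ = 2, x_{n+1} = x_n + 1 + 1/x_n², the sequence x_n − n is strictly increasing and converges; moreover x_n ≥ n + 2 for all n, and the limit C satisfies C = 2 + Σ_{n=0}^∞ 1/x_n². -/
theorem recurrence_limit_C (x : ℕ → ℝ)
    (h0 : x 0 = 2) (hrec : ∀ n, x (n + 1) = x n + 1 + 1 / (x n) ^ 2) :
    StrictMono (fun n : ℕ => x n - (n : ℝ)) ∧ (∀ n : ℕ, (n : ℝ) + 2 ≤ x n) ∧
    ∃ C : ℝ, Filter.Tendsto (fun n : ℕ => x n - (n : ℝ)) Filter.atTop (nhds C) ∧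
      C = 2 + ∑' n, 1 / (x n) ^ 2 := by
  have hge : ∀ n : ℕ, (n : ℝ) + 2 ≤ x n := by
    intro n
    induction n with
    | zero => simp [h0]
    | succ n ih =>
      have hx : 0 < x n := lt_of_lt_of_le (by positivity) ih
      have : 0 ≤ 1 / (x n) ^ 2 := by positivity
      rw [hrec]
      push_cast
      linarith
  have hpos : ∀ n, 0 < x n := fun n => lt_of_lt_of_le (by positivity) (hge n)
  have hkey : ∀ n : ℕ, x n - (n : ℝ) = 2 + ∑ k ∈ Finset.range n, 1 / (x k) ^ 2 := by
    intro n
    induction n with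
    | zero => simp [h0]
    | succ n ih =>
      rw [Finset.sum_range_succ, hrec]
      push_cast
      linarith
  have hsm : StrictMono (fun n : ℕ => x n - (n : ℝ)) := by
    apply strictMono_nat_of_lt_succ
    intro n
    have : 0 < 1 / (x n) ^ 2 := div_pos one_pos (pow_pos (hpos n) 2)
    simp only [hrec]
    push_cast
    linarith
  refine ⟨hsm, hge, ?_⟩
  have hsummable : Summable (fun n : ℕ => 1 / (x n) ^ 2) := by
    have hbound : Summable (fun n : ℕ => 1 / ((n : ℝ) + 1) ^ 2) := by
      have := (summable_nat_add_iff (f := fun n : ℕ => 1 / (n : ℝ) ^ 2) 1).mpr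
        ((Real.summable_one_div_nat_pow (p := 2)).mpr one_lt_two)
      simpa using this
    apply Summable.of_nonneg_of_le (fun n => by positivity) _ hbound
    intro n
    apply one_div_le_one_div_of_le (by positivity)
    have := hge n
    nlinarith [hpos n]
  refine ⟨2 + ∑' n, 1 / (x n) ^ 2, ?_, rfl⟩
  have := hsummable.hasSum.tendsto_sum_nat
  have h2 := this.const_add 2
  apply h2.congr
  intro n
  exact (hkey n).symm
end
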